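/- Let g = [[u, v], [conj(v), conj(u)]] ∈ SU(1,1) (so |u|² − |v|² = 1) and let λ > 0 be real. Then the matrix exp(diag(λ, −λ))·g = [[e^λ·u, e^λ·v], [e^{−λ}·conj(v), e^{−λ}·conj(u)]] is an admissible element of SL(2,ℂ): it can be written as h·b with h ∈ SU(1,1) and b an admissible element of AN. -/

import Mathlib

/-!
Put `s = M† M`. Writing `M = a g` with `a = diag(e^λ, e^{-λ})` and `g ∈ SU(1,1)`, we get
`g† = g⁻¹` and `a† = a`, so `s = g⁻¹ a² g`, which is admissible because `λ > 0`.

The decomposition `M = h b` with `h ∈ SU(1,1)`, `b ∈ AN` amounts to `b† b = s`: given such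
a `b`, `h = M b⁻¹` satisfies `h† h = b⁻†(M† M) b⁻¹ = 1`. The matrix `s` is `†`-self-adjoint of
determinant one, so as soon as `s₀₀ = |M₀₀|² - |M₁₀|² = e^{2λ}|u|² - e^{-2λ}|v|²` is positive it
has the Cholesky-type factor `b = [[√s₀₀, s₀₁/√s₀₀], [0, 1/√s₀₀]]`.
-/

open Matrix Complex

noncomputable section

/-- J = diag(1, −1). -/
def J2 : Matrix (Fin 2) (Fin 2) ℂ := !![1, 0; 0, -1]

/-- SU(1,1): determinant one matrices with g* J g = J. -/
def SU11 : Set (Matrix (Fin 2) (Fin 2) ℂ) :=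
  {g | g.det = 1 ∧ gᴴ * J2 * g = J2}

/-- M† = J M* J. -/
def dag2 (M : Matrix (Fin 2) (Fin 2) ℂ) : Matrix (Fin 2) (Fin 2) ℂ :=
  J2 * Mᴴ * J2

/-- AN ⊂ SL(2,ℂ): upper triangular, determinant one, positive real diagonal. -/
def AN2 : Set (Matrix (Fin 2) (Fin 2) ℂ) :=
  {b | b.det = 1 ∧ b 1 0 = 0 ∧
    (0 < (b 0 0).re ∧ (b 0 0).im = 0) ∧ (0 < (b 1 1).re ∧ (b 1 1).im = 0)}

/-- Admissible elements of Q for SU(1,1): conjugates g⁻¹ diag(e^μ, e^{-μ}) g, μ > 0,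
of exponentials of admissible traceless diagonals diag(μ, -μ). -/
def IsAdmissibleQ2 (s : Matrix (Fin 2) (Fin 2) ℂ) : Prop :=
  ∃ g ∈ SU11, ∃ lam mu : ℝ, mu < lam ∧ lam + mu = 0 ∧
    s = g⁻¹ * !![(Real.exp lam : ℂ), 0; 0, (Real.exp mu : ℂ)] * g

/-- Admissible elements of AN for SU(1,1). -/
def IsAdmissibleAN2 (b : Matrix (Fin 2) (Fin 2) ℂ) : Prop :=
  b ∈ AN2 ∧ IsAdmissibleQ2 (dag2 b * b)

lemma J2_mul_J2 : J2 * J2 = 1 := by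
  rw [J2, mul_fin_two, one_fin_two]; norm_num

lemma conjTranspose_J2 : J2ᴴ = J2 := by
  ext i j; fin_cases i <;> fin_cases j <;> simp [J2]

lemma J2_mul_J2_mul (A : Matrix (Fin 2) (Fin 2) ℂ) : J2 * (J2 * A) = A := by
  rw [← Matrix.mul_assoc, J2_mul_J2, Matrix.one_mul]

lemma conjTranspose_of_fin_two (a b c d : ℂ) :
    !![a, b; c, d]ᴴ = !![star a, star c; star b, star d] := by
  ext i j; fin_cases i <;> fin_cases j <;> rfl

lemma dag2_of (a b c d : ℂ) :
    dag2 !![a, b; c, d] = !![star a, -star c; -star b, star d] := by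
  rw [dag2, J2, conjTranspose_of_fin_two, mul_fin_two, mul_fin_two]; simp

lemma dag2_diag_ofReal (x y : ℝ) :
    dag2 !![(x : ℂ), 0; 0, (y : ℂ)] = !![(x : ℂ), 0; 0, (y : ℂ)] := by
  rw [dag2_of]; simp only [star_zero, neg_zero, Complex.star_def, conj_ofReal]

lemma dag2_one : dag2 1 = 1 := by
  rw [dag2, conjTranspose_one, Matrix.mul_one, J2_mul_J2]

lemma dag2_mul (A B : Matrix (Fin 2) (Fin 2) ℂ) : dag2 (A * B) = dag2 B * dag2 A := by
  simp only [dag2, conjTranspose_mul, Matrix.mul_assoc, J2_mul_J2_mul]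

lemma dag2_dag2 (A : Matrix (Fin 2) (Fin 2) ℂ) : dag2 (dag2 A) = A := by
  simp only [dag2, conjTranspose_mul, conjTranspose_conjTranspose, conjTranspose_J2,
    Matrix.mul_assoc, J2_mul_J2_mul, J2_mul_J2, Matrix.mul_one]

lemma det_dag2 (A : Matrix (Fin 2) (Fin 2) ℂ) : (dag2 A).det = star A.det := by
  have hJ : J2.det = -1 := by simp [J2, det_fin_two_of]
  rw [dag2, det_mul, det_mul, det_conjTranspose, hJ]; ring

lemma dag2_mul_self_apply_zero_zero (A : Matrix (Fin 2) (Fin 2) ℂ) :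
    (dag2 A * A) 0 0 = (normSq (A 0 0) - normSq (A 1 0) : ℝ) := by
  rw [eta_fin_two A, dag2_of, mul_fin_two]
  simp only [RCLike.star_def, neg_mul, of_apply, cons_val', cons_val_zero, cons_val_fin_one,
    cons_val_one, ofReal_sub, normSq_eq_conj_mul_self]
  ring

lemma mem_SU11_iff {g : Matrix (Fin 2) (Fin 2) ℂ} :
    g ∈ SU11 ↔ g.det = 1 ∧ dag2 g * g = 1 := by
  have hprod : dag2 g * g = J2 * (gᴴ * J2 * g) := by simp only [dag2, Matrix.mul_assoc]
  rw [hprod]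
  refine and_congr_right fun _ => ⟨fun h => by rw [h, J2_mul_J2], fun h => ?_⟩
  rw [← J2_mul_J2_mul (gᴴ * J2 * g), h, Matrix.mul_one]

lemma dag2_eq_inv_of_mem_SU11 {g : Matrix (Fin 2) (Fin 2) ℂ} (hg : g ∈ SU11) :
    dag2 g = g⁻¹ :=
  (inv_eq_left_inv (mem_SU11_iff.1 hg).2).symm

lemma mul_inv_mem_SU11 {M b : Matrix (Fin 2) (Fin 2) ℂ} (hM : M.det = 1) (hb : b.det = 1)
    (h : dag2 b * b = dag2 M * M) : M * b⁻¹ ∈ SU11 := by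
  have hbu : IsUnit b.det := hb ▸ isUnit_one
  refine mem_SU11_iff.2 ⟨by simp [hM, hb], ?_⟩
  calc dag2 (M * b⁻¹) * (M * b⁻¹) = dag2 b⁻¹ * (dag2 M * M) * b⁻¹ := by
        simp only [dag2_mul, Matrix.mul_assoc]
    _ = dag2 (b * b⁻¹) * (b * b⁻¹) := by
        simp only [← h, dag2_mul, Matrix.mul_assoc]
    _ = 1 := by
        rw [mul_nonsing_inv b hbu, dag2_one, Matrix.one_mul]

lemma exists_mem_AN2_dag2_mul_self_eq {s : Matrix (Fin 2) (Fin 2) ℂ} (hs : dag2 s = s)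
    (hdet : s.det = 1) (hpos : 0 < (s 0 0).re) : ∃ b ∈ AN2, dag2 b * b = s := by
  rw [eta_fin_two s, dag2_of] at hs
  have h00 : star (s 0 0) = s 0 0 := congrFun (congrFun hs 0) 0
  have h10 : -star (s 0 1) = s 1 0 := by simpa using congrFun (congrFun hs 1) 0
  set p := Real.sqrt (s 0 0).re
  have hp0 : 0 < p := Real.sqrt_pos.2 hpos
  have hpC : (p : ℂ) ≠ 0 := ofReal_ne_zero.2 hp0.ne'
  have hpp : (p : ℂ) * p = s 0 0 := by
    rw [← ofReal_mul, Real.mul_self_sqrt hpos.le]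
    exact conj_eq_iff_re.1 h00
  rw [det_fin_two] at hdet
  refine ⟨!![(p : ℂ), s 0 1 / p; 0, (p : ℂ)⁻¹], ⟨?_, rfl, ?_, ?_⟩, ?_⟩
  · rw [det_fin_two_of]; field_simp; ring
  · simp [hp0]
  · simp [← ofReal_inv, hp0]
  · have hstar : star (p : ℂ) = p := conj_ofReal p
    conv_rhs => rw [eta_fin_two s]
    rw [dag2_of, mul_fin_two]
    simp only [EmbeddingLike.apply_eq_iff_eq, vecCons_inj, and_true, star_zero, neg_zero,
      mul_zero, zero_mul, add_zero, hstar, star_div₀, star_inv₀]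
    refine ⟨⟨hpp, by field_simp⟩, by rw [← h10]; field_simp, ?_⟩
    rw [← h10, ← hpp] at hdet
    field_simp
    linear_combination -hdet

theorem exists_mem_SU11_mul_mem_AN2 {M : Matrix (Fin 2) (Fin 2) ℂ} (hdet : M.det = 1)
    (hpos : normSq (M 1 0) < normSq (M 0 0)) :
    ∃ h ∈ SU11, ∃ b ∈ AN2, dag2 b * b = dag2 M * M ∧ M = h * b := by
  have hself : dag2 (dag2 M * M) = dag2 M * M := by rw [dag2_mul, dag2_dag2]
  have hdet' : (dag2 M * M).det = 1 := by rw [det_mul, det_dag2, hdet, star_one, one_mul]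
  have hpos' : 0 < ((dag2 M * M) 0 0).re := by
    rw [dag2_mul_self_apply_zero_zero, ofReal_re]; linarith
  obtain ⟨b, hb, hbM⟩ := exists_mem_AN2_dag2_mul_self_eq hself hdet' hpos'
  refine ⟨M * b⁻¹, mul_inv_mem_SU11 hdet hb.1 hbM, b, hb, hbM, ?_⟩
  exact (nonsing_inv_mul_cancel_right b M (hb.1 ▸ isUnit_one)).symm

lemma mem_SU11_of_normSq_sub_normSq_eq_one {u v : ℂ} (h : normSq u - normSq v = 1) :
    !![u, v; star v, star u] ∈ SU11 := by
  have huv : star u * u - star v * v = 1 := by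
    simpa [normSq_eq_conj_mul_self, mul_comm] using congrArg ofReal h
  refine mem_SU11_iff.2 ⟨?_, ?_⟩
  · rw [det_fin_two_of]; linear_combination huv
  · rw [dag2_of, star_star, star_star, mul_fin_two, one_fin_two]
    simp only [EmbeddingLike.apply_eq_iff_eq, vecCons_inj, and_true]
    refine ⟨⟨?_, by ring⟩, by ring, ?_⟩ <;> linear_combination huv

lemma dag2_diag_mul_self {g : Matrix (Fin 2) (Fin 2) ℂ} (hg : g ∈ SU11) (x y : ℝ) :
    dag2 (!![(x : ℂ), 0; 0, (y : ℂ)] * g) * (!![(x : ℂ), 0; 0, (y : ℂ)] * g)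
      = g⁻¹ * !![((x * x : ℝ) : ℂ), 0; 0, ((y * y : ℝ) : ℂ)] * g := by
  have hsq : !![(x : ℂ), 0; 0, (y : ℂ)] * !![(x : ℂ), 0; 0, (y : ℂ)]
      = !![((x * x : ℝ) : ℂ), 0; 0, ((y * y : ℝ) : ℂ)] := by
    rw [mul_fin_two]; simp
  rw [dag2_mul, dag2_eq_inv_of_mem_SU11 hg, dag2_diag_ofReal, ← hsq]
  simp only [Matrix.mul_assoc]

lemma normSq_mul_conj_lt_normSq_mul {u v : ℂ} (h : normSq u - normSq v = 1) {x y : ℝ}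
    (hy : 0 ≤ y) (hyx : y < x) : normSq ((y : ℂ) * star v) < normSq ((x : ℂ) * u) := by
  have hx : 0 < x := hy.trans_lt hyx
  rw [normSq_mul, normSq_mul, normSq_ofReal, normSq_ofReal, Complex.star_def, normSq_conj]
  calc y * y * normSq v ≤ x * x * normSq v := by gcongr; exact normSq_nonneg v
    _ < x * x * normSq u := by gcongr; linarith

/-- for g = [[u,v],[conj v, conj u]] ∈ SU(1,1) and λ > 0, the matrix
exp(diag(λ,−λ))·g is an admissible element of SL(2,ℂ). -/
theorem su11_admissible_orbit
    (u v : ℂ) (hg : Complex.normSq u - Complex.normSq v = 1)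
    (lam : ℝ) (hlam : 0 < lam)
    (M : Matrix (Fin 2) (Fin 2) ℂ)
    (hM : M = !![(Real.exp lam : ℂ) * u, (Real.exp lam : ℂ) * v;
                 (Real.exp (-lam) : ℂ) * (starRingEnd ℂ) v,
                 (Real.exp (-lam) : ℂ) * (starRingEnd ℂ) u]) :
    ∃ h ∈ SU11, ∃ b, IsAdmissibleAN2 b ∧ M = h * b := by
  set g : Matrix (Fin 2) (Fin 2) ℂ := !![u, v; star v, star u]
  have hgSU : g ∈ SU11 := mem_SU11_of_normSq_sub_normSq_eq_one hg
  have hMg : M = !![(Real.exp lam : ℂ), 0; 0, (Real.exp (-lam) : ℂ)] * g := by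
    rw [hM, mul_fin_two]; simp
  have hdet : M.det = 1 := by
    rw [hMg, det_mul, hgSU.1, det_fin_two_of, mul_one, mul_zero, sub_zero, ← ofReal_mul,
      ← Real.exp_add, add_neg_cancel, Real.exp_zero, ofReal_one]
  have hpos : normSq (M 1 0) < normSq (M 0 0) := by
    simp only [hM, of_apply, cons_val', cons_val_zero, cons_val_one, empty_val', cons_val_fin_one]
    exact normSq_mul_conj_lt_normSq_mul hg (Real.exp_pos _).le (Real.exp_lt_exp.2 (by linarith))
  obtain ⟨h, hh, b, hb, hbM, hMhb⟩ := exists_mem_SU11_mul_mem_AN2 hdet hpos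
  refine ⟨h, hh, b, ⟨hb, g, hgSU, 2 * lam, -(2 * lam), by linarith, by ring, ?_⟩, hMhb⟩
  rw [hbM, hMg, dag2_diag_mul_self hgSU, ← Real.exp_add, ← Real.exp_add, two_mul, neg_add]
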